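/- (Lemma 2: input-to-state stability of the control error subsystem.) Let n ≥ 1, let A_n be the n×n upper shift matrix and b_n the last standard basis vector, and for ω_c > 1 let k ∈ ℝ^n have entries k_j = binom(n, j−1)·ω_c^{n+1−j} (the bandwidth parametrization placing all closed-loop eigenvalues at −ω_c), and set κ = (k, 1) ∈ ℝ^{n+1}. Then there exist constants c₅, c₆, c₇ > 0 such that for every differentiable function e : ℝ → ℝ^n and every bounded function z̃ : ℝ → ℝ^{n+1} with sup_{t≥0} ‖z̃(t)‖ = S < ∞, satisfying for all t ≥ 0 the perturbed closed-loop dynamics e′(t) = (A_n − b_n·k^⊤)·e(t) + ⟨κ, z̃(t)⟩·b_n, the following bound holds for all t ≥ 0: ‖e(t)‖ ≤ ω_c^{n−1}·c₅·‖e(0)‖·exp(−c₆·ω_c·t) + ω_c^{n−2}·c₇·S, where ‖·‖ denotes the Euclidean norm. -/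

import Mathlib

open Matrix

/-- The `n × n` upper shift matrix: ones on the superdiagonal, zeros elsewhere. -/
noncomputable def shiftMat (n : ℕ) : Matrix (Fin n) (Fin n) ℝ :=
  Matrix.of fun i j => if (i : ℕ) + 1 = (j : ℕ) then 1 else 0

/-- The last standard basis vector of `ℝ^n`. -/
noncomputable def lastBasis (n : ℕ) : Fin n → ℝ :=
  fun i => if (i : ℕ) = n - 1 then 1 else 0

/-- Bandwidth-parametrized feedback gain: `k_j = binom(n, j−1)·ω_c^{n+1−j}` for `j = 1,…,n`. -/
noncomputable def ctrlGain (n : ℕ) (ω : ℝ) : Fin n → ℝ :=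
  fun j => (n.choose (j : ℕ)) * ω ^ (n - (j : ℕ))

/-!
The lower-triangular Pascal matrix `T` with entries `C(j,i) ω^(j-i)` conjugates the closed-loop
matrix `A_n - b_n k` to the Jordan block `A_n - ω I`: the gain `k` is exactly row `n` of the Pascal
matrix, and `T b_n = b_n`. In the coordinates `y = T e` the system becomes the cascade
`y_j' = -ω y_j + y_{j+1}`, whose last stage is driven by the bounded input `⟨κ, z̃⟩`. Comparing a
scalar stage with `exp (-t)` (possible since `ω > 1`) bounds it by `ω / (ω - 1)` times the bound
on its input, so climbing the cascade gives
`‖y t‖ ≤ (ω / (ω - 1)) ^ n * (‖y 0‖ * exp (-t) + K S)`, where `K` bounds `z̃ ↦ ⟨κ, z̃⟩`.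
Going back through `T⁻¹` (`det T = 1`) costs only constants, which also absorb the powers of `ω`.
-/

open Real

theorem Fin.sum_ite_val_eq {M : Type*} [AddCommMonoid M] {n : ℕ} (m : ℕ) (f : Fin n → M) :
    (∑ i : Fin n, if (i : ℕ) = m then f i else 0) = if h : m < n then f ⟨m, h⟩ else 0 := by
  split_ifs with h
  · rw [Fintype.sum_eq_single ⟨m, h⟩ fun i hi => if_neg fun hm => hi (Fin.ext hm), if_pos rfl]
  · exact Finset.sum_eq_zero fun i _ => if_neg (by omega)

def pascalCoeff (ω : ℝ) (j i : ℕ) : ℝ := j.choose i * ω ^ (j - i)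

theorem pascalCoeff_succ (ω : ℝ) (j i : ℕ) :
    pascalCoeff ω (j + 1) i
      = (if 0 < i then pascalCoeff ω j (i - 1) else 0) + ω * pascalCoeff ω j i := by
  unfold pascalCoeff
  rcases i with _ | i
  · simp [pow_succ']
  rw [Nat.choose_succ_succ']
  rcases Nat.lt_or_ge j (i + 1) with h | h
  · simp [Nat.choose_eq_zero_of_lt h]
  · simp [show j - i = j - (i + 1) + 1 by omega, pow_succ]
    ring

noncomputable def pascalMat (n : ℕ) (ω : ℝ) : Matrix (Fin n) (Fin n) ℝ :=
  of fun j i => pascalCoeff ω j i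

theorem pascalMat_isLowerTriangular (n : ℕ) (ω : ℝ) : (pascalMat n ω).IsLowerTriangular :=
  fun j i (hji : OrderDual.toDual i < OrderDual.toDual j) => by
    simp [pascalMat, pascalCoeff, Nat.choose_eq_zero_of_lt (show (j : ℕ) < i from hji)]

theorem det_pascalMat (n : ℕ) (ω : ℝ) : (pascalMat n ω).det = 1 := by
  rw [det_of_isLowerTriangular _ (pascalMat_isLowerTriangular n ω)]
  simp [pascalMat, pascalCoeff]

theorem pascalMat_mulVec_lastBasis (n : ℕ) (ω : ℝ) :
    pascalMat n ω *ᵥ lastBasis n = lastBasis n := by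
  ext j
  simp only [mulVec, dotProduct, pascalMat, lastBasis, of_apply, mul_ite, mul_one, mul_zero]
  rw [Fin.sum_ite_val_eq, dif_pos (by have := j.isLt; omega)]
  rcases eq_or_ne (j : ℕ) (n - 1) with hj | hj
  · simp [hj, pascalCoeff]
  · simp [hj, pascalCoeff, Nat.choose_eq_zero_of_lt (show (j : ℕ) < n - 1 by omega)]

theorem shiftMat_mulVec_apply {n : ℕ} (v : Fin n → ℝ) (j : Fin n) :
    (shiftMat n *ᵥ v) j = if h : (j : ℕ) + 1 < n then v ⟨j + 1, h⟩ else 0 := by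
  simp only [mulVec, dotProduct, shiftMat, of_apply, ite_mul, one_mul, zero_mul,
    eq_comm (a := (j : ℕ) + 1)]
  exact Fin.sum_ite_val_eq _ v

theorem vecMul_shiftMat_apply {n : ℕ} (v : Fin n → ℝ) (j : Fin n) :
    (v ᵥ* shiftMat n) j = if h : 0 < (j : ℕ) then v ⟨j - 1, by omega⟩ else 0 := by
  simp only [vecMul, dotProduct, shiftMat, of_apply, mul_ite, mul_one, mul_zero]
  split_ifs with hj
  · calc _ = ∑ i : Fin n, if (i : ℕ) = j - 1 then v i else 0 :=
          Finset.sum_congr rfl fun i _ => if_congr (by omega) rfl rfl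
      _ = _ := by rw [Fin.sum_ite_val_eq, dif_pos (by omega)]
  · exact Finset.sum_eq_zero fun i _ => if_neg (by omega)

theorem pascalMat_mul_closedLoop (n : ℕ) (ω : ℝ) :
    pascalMat n ω * (shiftMat n - vecMulVec (lastBasis n) (ctrlGain n ω))
      = (shiftMat n - ω • 1) * pascalMat n ω := by
  rw [mul_sub, mul_vecMulVec, pascalMat_mulVec_lastBasis, sub_mul, smul_mul, one_mul]
  ext j l
  have hleft : (pascalMat n ω * shiftMat n) j l = (pascalMat n ω j ᵥ* shiftMat n) l := rfl
  have hright : (shiftMat n * pascalMat n ω) j l = (shiftMat n *ᵥ fun i => pascalMat n ω i l) j :=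
    rfl
  rw [Matrix.sub_apply, Matrix.sub_apply, Matrix.smul_apply, vecMulVec_apply, hleft, hright,
    vecMul_shiftMat_apply, shiftMat_mulVec_apply]
  simp only [pascalMat, of_apply, lastBasis, smul_eq_mul, dite_eq_ite]
  change _ - _ * pascalCoeff ω n l = _
  rcases Nat.lt_or_ge ((j : ℕ) + 1) n with hj | hj
  · rw [if_pos hj, if_neg (show (j : ℕ) ≠ n - 1 by omega), pascalCoeff_succ]
    ring
  · have hn : n = j + 1 := by have := j.isLt; omega
    rw [if_neg (show ¬(j : ℕ) + 1 < n by omega), if_pos (show (j : ℕ) = n - 1 by omega),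
      congrArg (fun m => pascalCoeff ω m l) hn, pascalCoeff_succ]
    ring

theorem le_mul_exp_of_hasDerivAt_le_mul {w w' : ℝ → ℝ} {K : ℝ}
    (hw : ∀ t, 0 ≤ t → HasDerivAt w (w' t) t) (hle : ∀ t, 0 ≤ t → w' t ≤ K * w t)
    {t : ℝ} (ht : 0 ≤ t) : w t ≤ w 0 * exp (K * t) := by
  have := le_gronwallBound_of_liminf_deriv_right_le (f := w) (f' := w') (δ := w 0) (K := K)
    (ε := 0) (a := 0) (b := t)
    (fun s hs => (hw s hs.1).continuousAt.continuousWithinAt)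
    (fun s hs _ hr => (hw s hs.1).hasDerivWithinAt.liminf_right_slope_le hr) le_rfl
    (fun s hs => by simpa using hle s hs.1) t ⟨ht, le_rfl⟩
  simpa [gronwallBound_ε0] using this

theorem le_of_hasDerivAt_neg_mul_add {ω l A B : ℝ} (hω : 0 < ω) (hl : l < ω) (hA : 0 ≤ A)
    (hB : 0 ≤ B) {z g : ℝ → ℝ} (hz : ∀ t, 0 ≤ t → HasDerivAt z (-ω * z t + g t) t)
    (hg : ∀ t, 0 ≤ t → g t ≤ A * exp (-l * t) + B) {t : ℝ} (ht : 0 ≤ t) :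
    z t ≤ (|z 0| + A / (ω - l)) * exp (-l * t) + B / ω := by
  have hωl : 0 < ω - l := sub_pos.2 hl
  -- `w` is `z` minus the steady response to the bound on `g`; it obeys `w' ≤ -ω w`.
  set w : ℝ → ℝ := fun s => z s - A / (ω - l) * exp (-l * s) - B / ω
  have hw : ∀ s, 0 ≤ s → HasDerivAt w (-ω * z s + g s - A / (ω - l) * (-l * exp (-l * s))) s :=
    fun s hs => by
      have := ((hasDerivAt_id s).const_mul (-l)).exp
      simpa [w, mul_comm] using ((hz s hs).sub (this.const_mul (A / (ω - l)))).sub_const (B / ω)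
  have hdecay := le_mul_exp_of_hasDerivAt_le_mul hw (K := -ω) (fun s hs => by
    have hgap : -ω * z s + g s - A / (ω - l) * (-l * exp (-l * s)) - -ω * w s
        = g s - A * exp (-l * s) - B := by
      simp only [w]; field_simp; ring
    linarith [hg s hs]) ht
  have hw0 : w 0 ≤ |z 0| := by
    simp only [w, mul_zero, exp_zero, mul_one]
    linarith [le_abs_self (z 0), div_nonneg hA hωl.le, div_nonneg hB hω.le]
  have hexp : exp (-ω * t) ≤ exp (-l * t) := exp_le_exp.2 (by nlinarith)
  have : w 0 * exp (-ω * t) ≤ |z 0| * exp (-l * t) :=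
    (mul_le_mul_of_nonneg_right hw0 (exp_pos _).le).trans
      (mul_le_mul_of_nonneg_left hexp (abs_nonneg _))
  simp only [w] at hdecay
  linarith

theorem abs_le_of_hasDerivAt_neg_mul_add {ω l A B : ℝ} (hω : 0 < ω) (hl : l < ω) (hA : 0 ≤ A)
    (hB : 0 ≤ B) {z g : ℝ → ℝ} (hz : ∀ t, 0 ≤ t → HasDerivAt z (-ω * z t + g t) t)
    (hg : ∀ t, 0 ≤ t → |g t| ≤ A * exp (-l * t) + B) {t : ℝ} (ht : 0 ≤ t) :
    |z t| ≤ (|z 0| + A / (ω - l)) * exp (-l * t) + B / ω := by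
  refine abs_le.2 ⟨?_, le_of_hasDerivAt_neg_mul_add hω hl hA hB hz
    (fun s hs => (abs_le.1 (hg s hs)).2) ht⟩
  have hneg := le_of_hasDerivAt_neg_mul_add hω hl hA hB (z := -z) (g := -g)
    (fun s hs => (hz s hs).neg.congr_deriv (by simp only [Pi.neg_apply]; ring))
    (fun s hs => by simp only [Pi.neg_apply]; linarith [(abs_le.1 (hg s hs)).1]) ht
  simp only [Pi.neg_apply, abs_neg] at hneg
  linarith

theorem abs_le_of_hasDerivAt_cascade_stage {ω C Y B : ℝ} (hω : 1 < ω) (hC : 1 ≤ C) (hB : 0 ≤ B)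
    {z g : ℝ → ℝ} (hz : ∀ t, 0 ≤ t → HasDerivAt z (-ω * z t + g t) t) (hz₀ : |z 0| ≤ Y)
    (hg : ∀ t, 0 ≤ t → |g t| ≤ C * (Y * exp (-t) + B)) {t : ℝ} (ht : 0 ≤ t) :
    |z t| ≤ ω / (ω - 1) * C * (Y * exp (-t) + B) := by
  have hω₁ : 0 < ω - 1 := sub_pos.2 hω
  have hY : 0 ≤ Y := (abs_nonneg _).trans hz₀
  have hzt := abs_le_of_hasDerivAt_neg_mul_add (l := 1) (A := C * Y) (B := C * B) (by linarith) hω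
    (by positivity) (by positivity) hz (fun s hs => by simpa [mul_add, mul_assoc] using hg s hs) ht
  rw [neg_one_mul] at hzt
  have hgain : ω / (ω - 1) = 1 + 1 / (ω - 1) := by field_simp; ring
  have hBω : C * B / ω ≤ C * B := div_le_self (by positivity) hω.le
  rw [hgain]
  calc |z t| ≤ (Y + C * Y / (ω - 1)) * exp (-t) + C * B := by
        exact hzt.trans (add_le_add (by gcongr) hBω)
    _ ≤ (C * Y + C * Y / (ω - 1)) * exp (-t) + (C * B + C * B / (ω - 1)) := by
        gcongr
        · nlinarith
        · linarith [div_nonneg (mul_nonneg (by linarith : (0:ℝ) ≤ C) hB) hω₁.le]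
    _ = (1 + 1 / (ω - 1)) * C * (Y * exp (-t) + B) := by ring

theorem norm_le_of_hasDerivAt_jordan {n : ℕ} {ω B : ℝ} (hω : 1 < ω) (hB : 0 ≤ B)
    {y : ℝ → Fin n → ℝ} {u : ℝ → ℝ}
    (hy : ∀ t, 0 ≤ t → HasDerivAt y ((shiftMat n - ω • 1) *ᵥ y t + u t • lastBasis n) t)
    (hu : ∀ t, 0 ≤ t → |u t| ≤ B) {t : ℝ} (ht : 0 ≤ t) :
    ‖y t‖ ≤ (ω / (ω - 1)) ^ n * (‖y 0‖ * exp (-t) + B) := by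
  set c := ω / (ω - 1)
  have hc : 1 ≤ c := (one_le_div (sub_pos.2 hω)).2 (by linarith)
  have hcoord : ∀ j s, 0 ≤ s → HasDerivAt (fun s => y s j)
      (-ω * y s j + if h : (j : ℕ) + 1 < n then y s ⟨j + 1, h⟩ else u s) s := by
    intro j s hs
    refine (hasDerivAt_pi.1 (hy s hs) j).congr_deriv ?_
    simp only [sub_mulVec, smul_mulVec, one_mulVec, Pi.add_apply, Pi.sub_apply, Pi.smul_apply,
      shiftMat_mulVec_apply, lastBasis, smul_eq_mul]
    split_ifs <;> first | omega | ring
  have hy₀ : ∀ j, |y 0 j| ≤ ‖y 0‖ := norm_le_pi_norm (y 0)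
  have hstage : ∀ d (j : Fin n), (j : ℕ) + d + 1 = n →
      ∀ s, 0 ≤ s → |y s j| ≤ c ^ (d + 1) * (‖y 0‖ * exp (-s) + B) := by
    intro d
    induction d with
    | zero =>
      intro j hj s hs
      have hlast : ¬(j : ℕ) + 1 < n := by omega
      simpa using abs_le_of_hasDerivAt_cascade_stage hω le_rfl hB
        (fun r hr => by simpa only [dif_neg hlast] using hcoord j r hr) (hy₀ j)
        (fun r hr => by simpa using (hu r hr).trans (le_add_of_nonneg_left (by positivity))) hs
    | succ d ih =>
      intro j hj s hs
      have hnext : (j : ℕ) + 1 < n := by omega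
      rw [pow_succ']
      exact abs_le_of_hasDerivAt_cascade_stage hω (one_le_pow₀ hc) hB
        (fun r hr => by simpa only [dif_pos hnext] using hcoord j r hr) (hy₀ j)
        (ih ⟨j + 1, hnext⟩ (by simp only; omega)) hs
  refine (pi_norm_le_iff_of_nonneg (by positivity)).2 fun j => ?_
  calc ‖y t j‖ = |y t j| := Real.norm_eq_abs _
    _ ≤ c ^ (n - 1 - j + 1) * (‖y 0‖ * exp (-t) + B) := hstage _ j (by omega) t ht
    _ ≤ c ^ n * (‖y 0‖ * exp (-t) + B) := by
        gcongr
        omega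

theorem hasDerivAt_pascalMat_mulVec {n : ℕ} {ω : ℝ} {e : ℝ → EuclideanSpace ℝ (Fin n)}
    {u : ℝ → ℝ} {t : ℝ}
    (he : HasDerivAt e (toEuclideanLin (shiftMat n - vecMulVec (lastBasis n) (ctrlGain n ω)) (e t)
      + u t • (EuclideanSpace.equiv (Fin n) ℝ).symm (lastBasis n)) t) :
    HasDerivAt (fun s => pascalMat n ω *ᵥ e s)
      ((shiftMat n - ω • 1) *ᵥ (pascalMat n ω *ᵥ e t) + u t • lastBasis n) t := by
  let Φ := (mulVecLin (pascalMat n ω)).toContinuousLinearMap.comp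
    (EuclideanSpace.equiv (Fin n) ℝ : EuclideanSpace ℝ (Fin n) →L[ℝ] Fin n → ℝ)
  refine (Φ.hasFDerivAt.comp_hasDerivAt t he).congr_deriv ?_
  change pascalMat n ω *ᵥ ((shiftMat n - vecMulVec (lastBasis n) (ctrlGain n ω)) *ᵥ e t
    + u t • lastBasis n) = _
  rw [mulVec_add, mulVec_smul, mulVec_mulVec, pascalMat_mul_closedLoop, ← mulVec_mulVec,
    pascalMat_mulVec_lastBasis]

theorem controller_ISS_general (n : ℕ) (ωc : ℝ) (hωc : 1 < ωc) :
    ∃ c₅ c₆ c₇ : ℝ, 0 < c₅ ∧ 0 < c₆ ∧ 0 < c₇ ∧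
      ∀ (e : ℝ → EuclideanSpace ℝ (Fin n)) (ztil : ℝ → EuclideanSpace ℝ (Fin (n + 1))) (S : ℝ),
        (∀ t : ℝ, 0 ≤ t → ‖ztil t‖ ≤ S) →
        (∀ t : ℝ, 0 ≤ t → HasDerivAt e
          ((Matrix.toEuclideanLin
              (shiftMat n - Matrix.vecMulVec (lastBasis n) (ctrlGain n ωc))) (e t)
            + ((Fin.snoc (ctrlGain n ωc) 1 : Fin (n + 1) → ℝ)
                  ⬝ᵥ (EuclideanSpace.equiv (Fin (n + 1)) ℝ) (ztil t))
              • (EuclideanSpace.equiv (Fin n) ℝ).symm (lastBasis n)) t) →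
        ∀ t : ℝ, 0 ≤ t →
          ‖e t‖ ≤ ωc ^ ((n : ℤ) - 1) * c₅ * ‖e 0‖ * Real.exp (-(c₆ * ωc * t))
            + ωc ^ ((n : ℤ) - 2) * c₇ * S := by
  have hω₀ : 0 < ωc := by linarith
  set T := pascalMat n ωc
  set c := ωc / (ωc - 1)
  obtain ⟨C₁, hC₁, hT⟩ := ((mulVecLin T).toContinuousLinearMap.comp
    (EuclideanSpace.equiv (Fin n) ℝ : EuclideanSpace ℝ (Fin n) →L[ℝ] Fin n → ℝ)).bound
  obtain ⟨C₂, hC₂, hTinv⟩ := (((EuclideanSpace.equiv (Fin n) ℝ).symm :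
    (Fin n → ℝ) →L[ℝ] EuclideanSpace ℝ (Fin n)).comp (mulVecLin T⁻¹).toContinuousLinearMap).bound
  let κ : EuclideanSpace ℝ (Fin (n + 1)) →L[ℝ] ℝ :=
    (dotProductBilin ℝ ℝ (Fin.snoc (ctrlGain n ωc) 1 : Fin (n + 1) → ℝ)).toContinuousLinearMap.comp
      (EuclideanSpace.equiv (Fin (n + 1)) ℝ : EuclideanSpace ℝ (Fin (n + 1)) →L[ℝ] Fin (n + 1) → ℝ)
  obtain ⟨K, hK, hκ⟩ := κ.bound
  refine ⟨C₂ * c ^ n * C₁ / ωc ^ ((n : ℤ) - 1), ωc⁻¹, C₂ * c ^ n * K / ωc ^ ((n : ℤ) - 2),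
    by positivity, by positivity, by positivity, fun e z S hS he t ht => ?_⟩
  have hS₀ : 0 ≤ S := (norm_nonneg _).trans (hS 0 le_rfl)
  have hy := norm_le_of_hasDerivAt_jordan hωc (mul_nonneg hK.le hS₀)
    (fun s hs => hasDerivAt_pascalMat_mulVec (u := fun s => κ (z s)) (he s hs))
    (fun s hs => (hκ (z s)).trans (by gcongr; exact hS s hs)) ht
  calc ‖e t‖ = ‖WithLp.toLp 2 (T⁻¹ *ᵥ (T *ᵥ e t))‖ := by
        rw [mulVec_mulVec, nonsing_inv_mul _ (by rw [det_pascalMat]; exact isUnit_one),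
          one_mulVec]
    _ ≤ C₂ * ‖T *ᵥ e t‖ := hTinv _
    _ ≤ C₂ * (c ^ n * (C₁ * ‖e 0‖ * exp (-t) + K * S)) := by
        gcongr
        exact hy.trans (by gcongr; exact hT (e 0))
    _ = _ := by
        rw [inv_mul_cancel₀ hω₀.ne', one_mul]
        field_simp

/-- Lemma 2 of the paper: input-to-state stability of the control error subsystem
`e′ = (A_n − b_n·k^⊤)·e + ⟨(k,1), z̃⟩·b_n` with bandwidth-parametrized gain `k`:
`‖e(t)‖ ≤ ω_c^{n−1}·c₅·‖e(0)‖·exp(−c₆ω_c t) + ω_c^{n−2}·c₇·sup‖z̃‖`. -/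
theorem controller_ISS (n : ℕ) (hn : 1 ≤ n) (ωc : ℝ) (hωc : 1 < ωc) :
    ∃ c₅ c₆ c₇ : ℝ, 0 < c₅ ∧ 0 < c₆ ∧ 0 < c₇ ∧
      ∀ (e : ℝ → EuclideanSpace ℝ (Fin n)) (ztil : ℝ → EuclideanSpace ℝ (Fin (n + 1))) (S : ℝ),
        (∀ t : ℝ, 0 ≤ t → ‖ztil t‖ ≤ S) →
        (∀ t : ℝ, 0 ≤ t → HasDerivAt e
          ((Matrix.toEuclideanLin
              (shiftMat n - Matrix.vecMulVec (lastBasis n) (ctrlGain n ωc))) (e t)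
            + ((Fin.snoc (ctrlGain n ωc) 1 : Fin (n + 1) → ℝ)
                  ⬝ᵥ (EuclideanSpace.equiv (Fin (n + 1)) ℝ) (ztil t))
              • (EuclideanSpace.equiv (Fin n) ℝ).symm (lastBasis n)) t) →
        ∀ t : ℝ, 0 ≤ t →
          ‖e t‖ ≤ ωc ^ ((n : ℤ) - 1) * c₅ * ‖e 0‖ * Real.exp (-(c₆ * ωc * t))
            + ωc ^ ((n : ℤ) - 2) * c₇ * S :=
  controller_ISS_general n ωc hωc
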